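/- Let b, x, y, z be positive integers with (x + y + z)² = b·x·y·z, and suppose x divides y and x divides z (as holds for every solution in the family generated by Vieta jumping from a Vieta-reduced solution). Define u₁ := (y, (y+z)/x), u₂ := (−x, −1), u₃ := (0, −1), and T := {a ∈ ℝ² : ⟨u₁,a⟩ ≤ 1, ⟨u₂,a⟩ ≤ 1, ⟨u₃,a⟩ ≤ 1}. Then T is a pseudointegral triangle whose only interior lattice point is the origin and whose boundary contains exactly b lattice points. -/

import Mathlib

open Set Pointwise

/-- The set of lattice points of the plane. -/
def latticePts : Set (ℝ × ℝ) := {p | ∃ m n : ℤ, p = ((m : ℝ), (n : ℝ))}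

/-- The coercion of a rational point of the plane to a real point. -/
def qpt (v : ℚ × ℚ) : ℝ × ℝ := ((v.1 : ℝ), (v.2 : ℝ))

/-- The Ehrhart function of a set `P ⊆ ℝ²`:  `t ↦ #(tP ∩ ℤ²)`. -/
noncomputable def ehr (P : Set (ℝ × ℝ)) (t : ℕ) : ℕ :=
  (((t : ℝ) • P) ∩ latticePts).ncard

/-- A set `P ⊆ ℝ²` is pseudointegral (a PIP) if its Ehrhart function agrees with
a polynomial at all positive integers. -/
def IsPIP (P : Set (ℝ × ℝ)) : Prop :=
  ∃ c : Polynomial ℚ, ∀ t : ℕ, 0 < t → (ehr P t : ℚ) = c.eval (t : ℚ)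

/-- A rational triangle: the convex hull of three non-collinear rational points. -/
def IsRatTriangle (T : Set (ℝ × ℝ)) : Prop :=
  ∃ p q r : ℚ × ℚ, ¬ Collinear ℝ ({qpt p, qpt q, qpt r} : Set (ℝ × ℝ)) ∧
    T = convexHull ℝ {qpt p, qpt q, qpt r}

/-- The standard inner product on ℝ². -/
def dotR (u a : ℝ × ℝ) : ℝ := u.1 * a.1 + u.2 * a.2

/-!
Write `y = x p`, `z = x q`; the equation becomes `(p + q + 1)² = b x p q`, and `T` is the polygon
`{a | ⟨uᵢ, a⟩ ≤ 1}` with integer normals `u₁ = (xp, p + q)`, `u₂ = (-x, -1)`, `u₃ = (0, -1)`.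
Since the normals are integral, a lattice point `v` lies in `tT` iff `⟨uᵢ, v⟩ ≤ t` for all `i`,
and in the interior of `tT` iff `⟨uᵢ, v⟩ ≤ t - 1`. So the lattice points of `tT` are those of
`(t - 1)T` together with the lattice points on the boundary of `tT`, and the latter are
parametrised, edge after edge, by the integers `j ∈ [0, bt)`. Hence `#(tT ∩ ℤ²) = 1 + b t (t + 1) / 2`,
the only interior lattice point of `T` is `0 = 0T ∩ ℤ²`, and `T` has `b` boundary lattice points.
-/

def intPt (v : ℤ × ℤ) : ℝ × ℝ := ((v.1 : ℝ), (v.2 : ℝ))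

lemma intPt_injective : Function.Injective intPt := by
  rintro ⟨m, n⟩ ⟨m', n'⟩ h
  simpa [intPt] using h

lemma inter_latticePts (s : Set (ℝ × ℝ)) : s ∩ latticePts = intPt '' (intPt ⁻¹' s) := by
  rw [image_preimage_eq_inter_range]
  congr
  ext a
  simp [intPt, latticePts, eq_comm]

lemma ncard_inter_latticePts (s : Set (ℝ × ℝ)) :
    (s ∩ latticePts).ncard = (intPt ⁻¹' s).ncard := by
  rw [inter_latticePts, ncard_image_of_injective _ intPt_injective]

lemma dotR_intPt (u v : ℤ × ℤ) :
    dotR (intPt u) (intPt v) = ((u.1 * v.1 + u.2 * v.2 : ℤ) : ℝ) := by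
  simp [dotR, intPt]

lemma dotR_smul (u a : ℝ × ℝ) (c : ℝ) : dotR u (c • a) = c * dotR u a := by
  simp only [dotR, Prod.smul_fst, Prod.smul_snd, smul_eq_mul]
  ring

lemma interior_setOf_dotR_le_one {w : ℝ × ℝ} (hw : w ≠ 0) :
    interior {a | dotR w a ≤ 1} = {a | dotR w a < 1} := by
  let f : StrongDual ℝ (ℝ × ℝ) :=
    w.1 • ContinuousLinearMap.fst ℝ ℝ ℝ + w.2 • ContinuousLinearMap.snd ℝ ℝ ℝ
  have hf : ⇑f = dotR w := by
    ext a
    simp [f, dotR]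
  have hf0 : f ≠ 0 := fun h => hw <| Prod.ext
    (by simpa [f] using congrArg (fun g : StrongDual ℝ (ℝ × ℝ) => g (1, 0)) h)
    (by simpa [f] using congrArg (fun g : StrongDual ℝ (ℝ × ℝ) => g (0, 1)) h)
  have h := (f.isOpenMap_of_ne_zero hf0).preimage_interior_eq_interior_preimage f.continuous
    (Iic 1)
  rw [interior_Iic, hf] at h
  exact h.symm

def polarPolygon {ι : Type*} (u : ι → ℤ × ℤ) : Set (ℝ × ℝ) :=
  {a | ∀ i, dotR (intPt (u i)) a ≤ 1}

def dilateLatticePts {ι : Type*} (u : ι → ℤ × ℤ) (t : ℤ) : Set (ℤ × ℤ) :=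
  {v | ∀ i, (u i).1 * v.1 + (u i).2 * v.2 ≤ t}

section PolarPolygon

variable {ι : Type*} (u : ι → ℤ × ℤ)

lemma dilateLatticePts_mono : Monotone (dilateLatticePts u) :=
  fun _ _ hst _ hv i => (hv i).trans hst

lemma polarPolygon_eq_iInter : polarPolygon u = ⋂ i, {a | dotR (intPt (u i)) a ≤ 1} := by
  ext
  simp [polarPolygon]

lemma isClosed_polarPolygon : IsClosed (polarPolygon u) := by
  rw [polarPolygon_eq_iInter]
  exact isClosed_iInter fun i => isClosed_le (by unfold dotR; fun_prop) continuous_const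

lemma interior_polarPolygon [Finite ι] (hu : ∀ i, u i ≠ 0) :
    interior (polarPolygon u) = {a | ∀ i, dotR (intPt (u i)) a < 1} := by
  have hw : ∀ i, intPt (u i) ≠ 0 := fun i h =>
    hu i (intPt_injective (h.trans (by ext <;> simp [intPt])))
  rw [polarPolygon_eq_iInter, interior_iInter_of_finite]
  simp_rw [interior_setOf_dotR_le_one (hw _)]
  ext
  simp

lemma preimage_intPt_smul_polarPolygon {t : ℕ} (ht : 0 < t) :
    intPt ⁻¹' ((t : ℝ) • polarPolygon u) = dilateLatticePts u t := by
  have ht' : (0 : ℝ) < t := by exact_mod_cast ht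
  ext v
  simp only [mem_preimage, mem_smul_set_iff_inv_smul_mem₀ ht'.ne', polarPolygon,
    dilateLatticePts, mem_ofPred_eq, dotR_smul, dotR_intPt, inv_mul_le_iff₀ ht', mul_one]
  exact_mod_cast Iff.rfl

lemma preimage_intPt_interior_polarPolygon [Finite ι] (hu : ∀ i, u i ≠ 0) :
    intPt ⁻¹' interior (polarPolygon u) = dilateLatticePts u 0 := by
  ext v
  simp only [interior_polarPolygon u hu, mem_preimage, dilateLatticePts, mem_ofPred_eq,
    dotR_intPt]
  refine forall_congr' fun i => ?_
  norm_cast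
  omega

lemma preimage_intPt_frontier_polarPolygon [Finite ι] (hu : ∀ i, u i ≠ 0) :
    intPt ⁻¹' frontier (polarPolygon u) = dilateLatticePts u 1 \ dilateLatticePts u 0 := by
  have h₁ := preimage_intPt_smul_polarPolygon u one_pos
  rw [Nat.cast_one, one_smul, Nat.cast_one] at h₁
  rw [(isClosed_polarPolygon u).frontier_eq, preimage_sdiff,
    preimage_intPt_interior_polarPolygon u hu, h₁]

end PolarPolygon

def normals (x p q : ℤ) : Fin 3 → ℤ × ℤ := ![(x * p, p + q), (-x, -1), (0, -1)]

-- Lattice points on the three edges of `tT`, indexed so that their index ranges tile `[0, bt)`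
-- (`facetIndices_union`); `(p + q, -x p)` is the primitive direction of the first edge.
def facetPt₁ (b x p q t j : ℤ) : ℤ × ℤ :=
  ((p + q) * j - b * p * t, b * x * p * t - (p + q + 2) * t - x * p * j)

def facetPt₂ (x t j : ℤ) : ℤ × ℤ := (-j, x * j - t)

def facetPt₃ (b t j : ℤ) : ℤ × ℤ := (b * t - j, -t)

section Count

variable {b x p q : ℤ}

lemma mem_dilateLatticePts_normals {t : ℤ} {v : ℤ × ℤ} :
    v ∈ dilateLatticePts (normals x p q) t ↔
      x * p * v.1 + (p + q) * v.2 ≤ t ∧ -(x * v.1) - v.2 ≤ t ∧ -v.2 ≤ t := by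
  simp [dilateLatticePts, normals, Fin.forall_fin_succ]

lemma dilateLatticePts_normals_zero (hx : 0 < x) (hp : 0 < p) (hq : 0 < q) :
    dilateLatticePts (normals x p q) 0 = {0} := by
  ext ⟨m, n⟩
  simp only [mem_dilateLatticePts_normals, mem_singleton_iff, Prod.mk_eq_zero]
  constructor
  · rintro ⟨h₁, h₂, h₃⟩
    obtain rfl : n = 0 := by nlinarith
    have : x * m = 0 := by nlinarith
    exact ⟨(mul_eq_zero.mp this).resolve_left hx.ne', rfl⟩
  · rintro ⟨rfl, rfl⟩
    simp

lemma dilateLatticePts_normals_sdiff (t : ℤ) :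
    dilateLatticePts (normals x p q) t \ dilateLatticePts (normals x p q) (t - 1) =
      {v | v ∈ dilateLatticePts (normals x p q) t ∧ x * p * v.1 + (p + q) * v.2 = t} ∪
      {v | v ∈ dilateLatticePts (normals x p q) t ∧
        x * p * v.1 + (p + q) * v.2 < t ∧ -(x * v.1) - v.2 = t} ∪
      {v | v ∈ dilateLatticePts (normals x p q) t ∧
        x * p * v.1 + (p + q) * v.2 < t ∧ -(x * v.1) - v.2 < t ∧ -v.2 = t} := by
  ext v
  simp only [mem_sdiff, mem_union, mem_ofPred_eq, mem_dilateLatticePts_normals]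
  omega

lemma facetPt₁_injective (hpq : p + q ≠ 0) (t : ℤ) : Function.Injective (facetPt₁ b x p q t) :=
  fun i j h => mul_left_cancel₀ hpq (by simpa [facetPt₁] using congrArg Prod.fst h)

lemma facetPt₂_injective (t : ℤ) : Function.Injective (facetPt₂ x t) :=
  fun i j h => by simpa [facetPt₂] using congrArg Prod.fst h

lemma facetPt₃_injective (t : ℤ) : Function.Injective (facetPt₃ b t) :=
  fun i j h => by simpa [facetPt₃] using congrArg Prod.fst h

lemma image_facetPt₁ (hp : 0 < p) (hq : 0 < q) (heq : (p + q + 1) ^ 2 = b * x * p * q)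
    (t : ℤ) :
    facetPt₁ b x p q t ''
        {j | t * (p + q + 1) ≤ x * q * j ∧ x * p * j ≤ b * x * p * t - t * (p + q + 1)} =
      {v | v ∈ dilateLatticePts (normals x p q) t ∧ x * p * v.1 + (p + q) * v.2 = t} := by
  ext ⟨m, n⟩
  simp only [mem_image, mem_ofPred_eq, mem_dilateLatticePts_normals, facetPt₁, Prod.mk.injEq]
  constructor
  · rintro ⟨j, ⟨h₂, h₃⟩, rfl, rfl⟩
    have h₁ : x * p * ((p + q) * j - b * p * t) +
        (p + q) * (b * x * p * t - (p + q + 2) * t - x * p * j) = t := by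
      linear_combination -t * heq
    exact ⟨⟨h₁.le, by linear_combination h₂, by linear_combination h₃⟩, h₁⟩
  · rintro ⟨⟨-, h₂, h₃⟩, h₁⟩
    -- the equation is a Bezout relation between `p + q` and `x p`
    have hcop : IsCoprime (p + q) (x * p) :=
      ⟨b * x * p - p - q - 2, -(b * p), by linear_combination -heq⟩
    obtain ⟨j, hj⟩ : p + q ∣ m + b * p * t := hcop.dvd_of_dvd_mul_left
      ⟨t * (b * x * p - p - q - 2) - n, by linear_combination h₁ + t * heq⟩
    obtain rfl : n = b * x * p * t - (p + q + 2) * t - x * p * j := mul_left_cancel₀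
      (by positivity : p + q ≠ 0) (by linear_combination h₁ - x * p * hj + t * heq)
    exact ⟨j, ⟨by linear_combination h₂ + x * hj, by linear_combination h₃⟩,
      by linear_combination -hj, rfl⟩

lemma image_facetPt₂ (hx : 0 < x) (t : ℤ) :
    facetPt₂ x t '' {j | 0 ≤ j ∧ x * q * j < t * (p + q + 1)} =
      {v | v ∈ dilateLatticePts (normals x p q) t ∧
        x * p * v.1 + (p + q) * v.2 < t ∧ -(x * v.1) - v.2 = t} := by
  ext ⟨m, n⟩
  simp only [mem_image, mem_ofPred_eq, mem_dilateLatticePts_normals, facetPt₂, Prod.mk.injEq]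
  constructor
  · rintro ⟨j, ⟨h₀, h₁⟩, rfl, rfl⟩
    have h₁' : x * p * -j + (p + q) * (x * j - t) < t := by linear_combination h₁
    exact ⟨⟨h₁'.le, by ring_nf; rfl, by nlinarith⟩, h₁', by ring⟩
  · rintro ⟨⟨-, -, h₃⟩, h₁, h₂⟩
    exact ⟨-m, ⟨by nlinarith, by linear_combination h₁ + (p + q) * h₂⟩, by ring,
      by linear_combination h₂⟩

lemma image_facetPt₃ (hx : 0 < x) (t : ℤ) :
    facetPt₃ b t '' {j | b * x * p * t - t * (p + q + 1) < x * p * j ∧ j < b * t} =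
      {v | v ∈ dilateLatticePts (normals x p q) t ∧
        x * p * v.1 + (p + q) * v.2 < t ∧ -(x * v.1) - v.2 < t ∧ -v.2 = t} := by
  ext ⟨m, n⟩
  simp only [mem_image, mem_ofPred_eq, mem_dilateLatticePts_normals, facetPt₃, Prod.mk.injEq]
  constructor
  · rintro ⟨j, ⟨h₁, h₂⟩, rfl, rfl⟩
    have h₁' : x * p * (b * t - j) + (p + q) * -t < t := by linear_combination h₁
    have h₂' : -(x * (b * t - j)) - -t < t := by nlinarith
    exact ⟨⟨h₁'.le, h₂'.le, (neg_neg t).le⟩, h₁', h₂', neg_neg t⟩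
  · rintro ⟨-, h₁, h₂, h₃⟩
    obtain rfl : n = -t := by linear_combination -h₃
    exact ⟨b * t - m, ⟨by linear_combination h₁, by nlinarith⟩, by ring, rfl⟩

lemma facetIndices_union (hx : 0 < x) (hp : 0 < p) (hq : 0 < q)
    (heq : (p + q + 1) ^ 2 = b * x * p * q) {t : ℤ} (ht : 0 < t) :
    {j | t * (p + q + 1) ≤ x * q * j ∧ x * p * j ≤ b * x * p * t - t * (p + q + 1)} ∪
      {j | 0 ≤ j ∧ x * q * j < t * (p + q + 1)} ∪
      {j | b * x * p * t - t * (p + q + 1) < x * p * j ∧ j < b * t} = Ico 0 (b * t) := by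
  have hN : 0 < t * (p + q + 1) := by positivity
  have hbt : x * p * q * (b * t) = (p + q + 1) * (t * (p + q + 1)) := by
    linear_combination -t * heq
  have hxp : 0 < x * p := by positivity
  have hxq : 0 < x * q := by positivity
  ext j
  simp only [mem_union, mem_ofPred_eq, mem_Ico]
  constructor
  · rintro ((⟨h₁, h₂⟩ | ⟨h₁, h₂⟩) | ⟨h₁, h₂⟩)
    · exact ⟨(pos_of_mul_pos_right (hN.trans_le h₁) hxq.le).le,
        lt_of_mul_lt_mul_left (by linarith) hxp.le⟩
    · refine ⟨h₁, lt_of_mul_lt_mul_left (a := x * p * q) ?_ (by positivity)⟩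
      nlinarith
    · refine ⟨(pos_of_mul_pos_right (a := x * p * q) ?_ (by positivity)).le, h₂⟩
      nlinarith [mul_pos hp hN]
  · rintro ⟨h₁, h₂⟩
    by_cases h : x * q * j < t * (p + q + 1)
    · exact Or.inl (Or.inr ⟨h₁, h⟩)
    by_cases h' : x * p * j ≤ b * x * p * t - t * (p + q + 1)
    · exact Or.inl (Or.inl ⟨by omega, h'⟩)
    · exact Or.inr ⟨by omega, h₂⟩

lemma disjoint_facetIndices (hp : 0 < p) (hq : 0 < q)
    (heq : (p + q + 1) ^ 2 = b * x * p * q) {t : ℤ} (ht : 0 ≤ t) :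
    Disjoint {j | 0 ≤ j ∧ x * q * j < t * (p + q + 1)}
      {j | b * x * p * t - t * (p + q + 1) < x * p * j ∧ j < b * t} :=
  disjoint_left.2 fun j ⟨_, h₂⟩ ⟨h₃, _⟩ => by nlinarith

lemma encard_dilateLatticePts_normals_sdiff (hx : 0 < x) (hp : 0 < p) (hq : 0 < q)
    (heq : (p + q + 1) ^ 2 = b * x * p * q) {t : ℤ} (ht : 0 < t) :
    (dilateLatticePts (normals x p q) t \ dilateLatticePts (normals x p q) (t - 1)).encard =
      (b * t).toNat := by
  rw [dilateLatticePts_normals_sdiff, encard_union_eq ?_, encard_union_eq ?_,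
    ← image_facetPt₁ hp hq heq, ← image_facetPt₂ hx, ← image_facetPt₃ (b := b) hx,
    (facetPt₁_injective (by positivity) t).encard_image,
    (facetPt₂_injective t).encard_image, (facetPt₃_injective t).encard_image,
    ← encard_union_eq ?_, ← encard_union_eq ?_, facetIndices_union hx hp hq heq ht,
    ← Finset.coe_Ico, encard_coe_eq_coe_finsetCard, Int.card_Ico, sub_zero]
  · exact disjoint_union_left.2 ⟨disjoint_left.2 fun j h₁ h₃ => h₃.1.not_ge h₁.2,
      disjoint_facetIndices hp hq heq ht.le⟩
  · exact disjoint_left.2 fun j h₁ h₂ => h₂.2.not_ge h₁.1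
  · exact disjoint_left.2 fun v h₁ h₂ => h₂.2.1.ne h₁.2
  · exact disjoint_union_left.2 ⟨disjoint_left.2 fun v h₁ h₃ => h₃.2.1.ne h₁.2,
      disjoint_left.2 fun v h₂ h₃ => h₃.2.2.1.ne h₂.2.2⟩

lemma finite_dilateLatticePts_normals (hx : 0 < x) (hp : 0 < p) (hq : 0 < q)
    (heq : (p + q + 1) ^ 2 = b * x * p * q) {t : ℤ} (ht : 0 ≤ t) :
    (dilateLatticePts (normals x p q) t).Finite := by
  induction t, ht using Int.leInduction with
  | base => simp [dilateLatticePts_normals_zero hx hp hq]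
  | succ t ht ih =>
    have h := encard_dilateLatticePts_normals_sdiff hx hp hq heq (t := t + 1) (by omega)
    rw [add_sub_cancel_right] at h
    exact (finite_of_encard_eq_coe h).of_sdiff ih

lemma ncard_dilateLatticePts_normals_sdiff (hx : 0 < x) (hp : 0 < p) (hq : 0 < q)
    (heq : (p + q + 1) ^ 2 = b * x * p * q) {t : ℤ} (ht : 0 < t) :
    ((dilateLatticePts (normals x p q) t \
      dilateLatticePts (normals x p q) (t - 1)).ncard : ℤ) = b * t := by
  have hbt : 0 < b * t :=
    pos_of_mul_pos_right (a := x * p * q) (by nlinarith [sq_nonneg (p + q + 1)]) (by positivity)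
  rw [ncard_def, encard_dilateLatticePts_normals_sdiff hx hp hq heq ht, ENat.toNat_natCast,
    Int.toNat_of_nonneg hbt.le]

lemma two_mul_ncard_dilateLatticePts_normals (hx : 0 < x) (hp : 0 < p) (hq : 0 < q)
    (heq : (p + q + 1) ^ 2 = b * x * p * q) {t : ℤ} (ht : 0 ≤ t) :
    2 * ((dilateLatticePts (normals x p q) t).ncard : ℤ) = 2 + b * t * (t + 1) := by
  induction t, ht using Int.leInduction with
  | base => simp [dilateLatticePts_normals_zero hx hp hq]
  | succ t ht ih =>
    have h := ncard_dilateLatticePts_normals_sdiff hx hp hq heq (t := t + 1) (by omega)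
    rw [add_sub_cancel_right] at h
    rw [← ncard_sdiff_add_ncard_of_subset (dilateLatticePts_mono _ (by omega : t ≤ t + 1))
      (finite_dilateLatticePts_normals hx hp hq heq (by omega))]
    push_cast
    linear_combination 2 * h + ih

end Count

theorem stmt_18_general (b x y z : ℤ) (hx : 0 < x) (hy : 0 < y) (hz : 0 < z)
    (hsol : (x + y + z) ^ 2 = b * x * y * z) (hdy : x ∣ y) (hdz : x ∣ z)
    (T : Set (ℝ × ℝ))
    (hT : T = {a : ℝ × ℝ |
      (y : ℝ) * a.1 + (((y + z) / x : ℤ) : ℝ) * a.2 ≤ 1 ∧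
      (-(x : ℝ)) * a.1 + (-1 : ℝ) * a.2 ≤ 1 ∧
      (0 : ℝ) * a.1 + (-1 : ℝ) * a.2 ≤ 1}) :
    IsPIP T ∧ interior T ∩ latticePts = {((0 : ℝ), (0 : ℝ))} ∧
      ((frontier T ∩ latticePts).ncard : ℤ) = b := by
  obtain ⟨p, rfl⟩ := hdy
  obtain ⟨q, rfl⟩ := hdz
  have hp : 0 < p := pos_of_mul_pos_right hy hx.le
  have hq : 0 < q := pos_of_mul_pos_right hz hx.le
  have heq : (p + q + 1) ^ 2 = b * x * p * q :=
    mul_left_cancel₀ (pow_ne_zero 2 hx.ne') (by linear_combination hsol)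
  have hu : ∀ i, normals x p q i ≠ 0 := by
    intro i
    fin_cases i <;> simp [normals, hx.ne', hp.ne']
  obtain rfl : T = polarPolygon (normals x p q) := by
    rw [hT, ← mul_add, Int.mul_ediv_cancel_left _ hx.ne']
    ext a
    simp [polarPolygon, normals, dotR, intPt, Fin.forall_fin_succ]
  refine ⟨⟨Polynomial.C 1 + Polynomial.C ((b : ℚ) / 2) * (Polynomial.X + Polynomial.X ^ 2),
    fun t ht => ?_⟩, ?_, ?_⟩
  · have h := two_mul_ncard_dilateLatticePts_normals hx hp hq heq (Int.natCast_nonneg t)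
    rw [ehr, ncard_inter_latticePts, preimage_intPt_smul_polarPolygon _ ht]
    simp only [Polynomial.eval_add, Polynomial.eval_mul, Polynomial.eval_pow,
      Polynomial.eval_C, Polynomial.eval_X]
    qify at h
    linear_combination h / 2
  · rw [inter_latticePts, preimage_intPt_interior_polarPolygon _ hu,
      dilateLatticePts_normals_zero hx hp hq, image_singleton]
    simp [intPt]
  · rw [ncard_inter_latticePts, preimage_intPt_frontier_polarPolygon _ hu]
    simpa using ncard_dilateLatticePts_normals_sdiff hx hp hq heq one_pos

/-- let b, x, y, z be positive integers with
`(x + y + z)² = b·x·y·z`, `x ∣ y` and `x ∣ z`.  With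
`u₁ = (y, (y+z)/x)`, `u₂ = (−x, −1)`, `u₃ = (0, −1)` and
`T = {a : ⟨u₁,a⟩ ≤ 1, ⟨u₂,a⟩ ≤ 1, ⟨u₃,a⟩ ≤ 1}`, the triangle `T` is
pseudointegral, its only interior lattice point is the origin, and its boundary
contains exactly `b` lattice points. -/
theorem stmt_18 (b x y z : ℤ) (hb : 0 < b) (hx : 0 < x) (hy : 0 < y) (hz : 0 < z)
    (hsol : (x + y + z) ^ 2 = b * x * y * z) (hdy : x ∣ y) (hdz : x ∣ z)
    (T : Set (ℝ × ℝ))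
    (hT : T = {a : ℝ × ℝ |
      (y : ℝ) * a.1 + (((y + z) / x : ℤ) : ℝ) * a.2 ≤ 1 ∧
      (-(x : ℝ)) * a.1 + (-1 : ℝ) * a.2 ≤ 1 ∧
      (0 : ℝ) * a.1 + (-1 : ℝ) * a.2 ≤ 1}) :
    IsPIP T ∧ interior T ∩ latticePts = {((0 : ℝ), (0 : ℝ))} ∧
      ((frontier T ∩ latticePts).ncard : ℤ) = b :=
  stmt_18_general b x y z hx hy hz hsol hdy hdz T hT
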